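/- Under the assumptions of the previous recursion (f_1, …, f_T twice continuously differentiable, μ-strongly convex with L_H-Lipschitz Hessians; x̂_0 = x_1 with ‖x_1 − x*_1‖ ≤ μ/L_H; x̂_t the exact online Newton sequence; max_{2 ≤ t ≤ T}‖x*_t − x*_{t-1}‖ ≤ μ/(2L_H)), let c_1, c_2 > 0 be such that ρ' := (1/16)(1+c_1)²(1+c_2) < 1 and set ρ'' := (L_H/(2μ))²(1+1/c_1)²(1+1/c_2). Then Σ_{t=1}^T ‖x̂_t − x*_t‖² ≤ (‖x̂_1 − x*_1‖² − ρ'‖x̂_T − x*_T‖²)/(1 − ρ') + (ρ''/(1 − ρ'))·Σ_{t=2}^T ‖x*_t − x*_{t-1}‖⁴. -/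

import Mathlib

open Finset
open scoped RealInnerProductSpace

section Aux

open InnerProductSpace Set

noncomputable def oonDualSymmCLM (E : Type*) [NormedAddCommGroup E] [InnerProductSpace ℝ E]
    [FiniteDimensional ℝ E] : StrongDual ℝ E →L[ℝ] E :=
  LinearMap.toContinuousLinearMap
    { toFun := fun φ => (toDual ℝ E).symm φ
      map_add' := fun a b => by simp
      map_smul' := fun r a => by simp [starRingEnd_apply] }

variable {E : Type*} [NormedAddCommGroup E] [InnerProductSpace ℝ E] [FiniteDimensional ℝ E]

lemma oon_contDiff_gradient (f : E → ℝ) (hf : ContDiff ℝ 2 f) : ContDiff ℝ 1 (gradient f) := by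
  have : gradient f = fun x => oonDualSymmCLM E (fderiv ℝ f x) := rfl
  rw [this]
  exact (oonDualSymmCLM E).contDiff.comp (hf.fderiv_right (by norm_num))

lemma oon_isUnit_of_strong {μ : ℝ} (hμ : 0 < μ) (H : E →L[ℝ] E)
    (h : ∀ v, μ * ‖v‖ ^ 2 ≤ ⟪H v, v⟫) : IsUnit H := by
  have hinj : Function.Injective H := by
    intro a b hab
    have h0 : H (a - b) = 0 := by rw [map_sub, hab, sub_self]
    have h1 := h (a - b)
    rw [h0, inner_zero_left] at h1
    have h2 : ‖a - b‖ ^ 2 ≤ 0 := by nlinarith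
    have h3 : ‖a - b‖ = 0 := by nlinarith [sq_nonneg ‖a - b‖, norm_nonneg (a - b)]
    rwa [norm_sub_eq_zero_iff] at h3
  have hbij : Function.Bijective (H : E →ₗ[ℝ] E) :=
    ⟨hinj, (LinearMap.injective_iff_surjective).mp hinj⟩
  let e := (LinearEquiv.ofBijective (H : E →ₗ[ℝ] E) hbij).toContinuousLinearEquiv
  refine ⟨e.toUnit, ?_⟩
  ext v; rfl

lemma oon_inverse_apply_bound {μ : ℝ} (hμ : 0 < μ) (H : E →L[ℝ] E)
    (h : ∀ v, μ * ‖v‖ ^ 2 ≤ ⟪H v, v⟫) (w : E) :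
    ‖Ring.inverse H w‖ ≤ ‖w‖ / μ ∧ H (Ring.inverse H w) = w := by
  have hu := oon_isUnit_of_strong hμ H h
  have h2 : H * Ring.inverse H = 1 := Ring.mul_inverse_cancel H hu
  have happ : H (Ring.inverse H w) = w := by
    have := congrArg (fun (A : E →L[ℝ] E) => A w) h2
    simpa [ContinuousLinearMap.mul_apply] using this
  refine ⟨?_, happ⟩
  set v := Ring.inverse H w with hv
  have h1 : μ * ‖v‖ ^ 2 ≤ ⟪w, v⟫ := by have := h v; rwa [happ] at this
  have h3 : ⟪w, v⟫ ≤ ‖w‖ * ‖v‖ := real_inner_le_norm w v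
  rcases eq_or_lt_of_le (norm_nonneg v) with h0 | h0
  · rw [← h0]; positivity
  · rw [le_div_iff₀ hμ]; nlinarith

lemma oon_inverse_comp {μ : ℝ} (hμ : 0 < μ) (H : E →L[ℝ] E)
    (h : ∀ v, μ * ‖v‖ ^ 2 ≤ ⟪H v, v⟫) (u : E) :
    Ring.inverse H (H u) = u := by
  have hu := oon_isUnit_of_strong hμ H h
  have h2 : Ring.inverse H * H = 1 := Ring.inverse_mul_cancel H hu
  have := congrArg (fun (A : E →L[ℝ] E) => A u) h2
  simpa [ContinuousLinearMap.mul_apply] using this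

lemma oon_taylor_grad (f : E → ℝ) (hf : ContDiff ℝ 2 f) {LH : ℝ}
    (hLip : ∀ x y, ‖fderiv ℝ (gradient f) x - fderiv ℝ (gradient f) y‖ ≤ LH * ‖x - y‖)
    (x y : E) :
    ‖gradient f y - gradient f x - fderiv ℝ (gradient f) x (y - x)‖ ≤ LH / 2 * ‖y - x‖ ^ 2 := by
  set G := gradient f with hG
  set H := fderiv ℝ (gradient f) with hH
  have hG1 : ContDiff ℝ 1 G := oon_contDiff_gradient f hf
  have hGd : Differentiable ℝ G := hG1.differentiable one_ne_zero
  set v := y - x with hv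
  set g : ℝ → E := fun s => G (x + s • v) - s • (H x v) - G x with hg
  have hc : ∀ s : ℝ, HasDerivAt (fun s : ℝ => x + s • v) v s := by
    intro s
    simpa using ((hasDerivAt_id s).smul_const v).const_add x
  have hderiv : ∀ s : ℝ, HasDerivAt g ((H (x + s • v) - H x) v) s := by
    intro s
    have h1 : HasDerivAt (fun s : ℝ => G (x + s • v)) (H (x + s • v) v) s :=
      (hGd (x + s • v)).hasFDerivAt.comp_hasDerivAt (l := G) s (hc s)
    have h2 : HasDerivAt (fun s : ℝ => s • (H x v)) (H x v) s := by
      simpa using (hasDerivAt_id s).smul_const (H x v)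
    simpa [g, ContinuousLinearMap.sub_apply] using (h1.sub h2).sub_const (G x)
  have key : ∀ s ∈ Icc (0:ℝ) 1, ‖g s‖ ≤ LH / 2 * ‖v‖ ^ 2 * s ^ 2 := by
    have := image_norm_le_of_norm_deriv_right_le_deriv_boundary
      (f := g) (f' := fun s => (H (x + s • v) - H x) v) (a := 0) (b := 1)
      (fun s _ => (hderiv s).continuousAt.continuousWithinAt)
      (fun s _ => (hderiv s).hasDerivWithinAt)
      (B := fun s => LH / 2 * ‖v‖ ^ 2 * s ^ 2) (B' := fun s => LH * ‖v‖ ^ 2 * s)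
      (by simp [g]) (fun s => by
        have := (hasDerivAt_pow 2 s).const_mul (LH / 2 * ‖v‖ ^ 2)
        exact this.congr_deriv (by norm_num; ring)) ?_
    · exact this
    · intro s hs
      have hb : ‖H (x + s • v) - H x‖ ≤ LH * (s * ‖v‖) := by
        have := hLip (x + s • v) x
        simpa [norm_smul, abs_of_nonneg hs.1] using this
      calc ‖(H (x + s • v) - H x) v‖ ≤ ‖H (x + s • v) - H x‖ * ‖v‖ :=
            (H (x + s • v) - H x).le_opNorm v
        _ ≤ LH * (s * ‖v‖) * ‖v‖ := by
            exact mul_le_mul_of_nonneg_right hb (norm_nonneg v)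
        _ = LH * ‖v‖ ^ 2 * s := by ring
  have h1 := key 1 ⟨zero_le_one, le_rfl⟩
  have hxy : x + (1:ℝ) • v = y := by rw [one_smul]; simp [v]
  have h1' : ‖G (x + (1:ℝ) • v) - (1:ℝ) • (H x v) - G x‖ ≤ LH / 2 * ‖v‖ ^ 2 * 1 ^ 2 := h1
  rw [hxy, one_smul] at h1'
  calc ‖G y - G x - H x v‖ = ‖G y - H x v - G x‖ := by congr 1; abel
    _ ≤ LH / 2 * ‖v‖ ^ 2 * 1 ^ 2 := h1'
    _ = LH / 2 * ‖v‖ ^ 2 := by ring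

lemma oon_grad_zero_of_min (f : E → ℝ) (z : E) (hmin : ∀ x, f z ≤ f x) :
    gradient f z = 0 := by
  have h : IsLocalMin f z := Filter.Eventually.of_forall hmin
  have h0 : fderiv ℝ f z = 0 := h.fderiv_eq_zero
  rw [gradient, h0, map_zero]

lemma oon_newton_step (f : E → ℝ) (hf : ContDiff ℝ 2 f) {μ LH : ℝ} (hμ : 0 < μ)
    (hstrong : ∀ x v, μ * ‖v‖ ^ 2 ≤ ⟪fderiv ℝ (gradient f) x v, v⟫)
    (hLip : ∀ x y, ‖fderiv ℝ (gradient f) x - fderiv ℝ (gradient f) y‖ ≤ LH * ‖x - y‖)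
    (z p : E) (hz : gradient f z = 0) :
    ‖p - Ring.inverse (fderiv ℝ (gradient f) p) (gradient f p) - z‖ ≤
      LH / (2 * μ) * ‖p - z‖ ^ 2 := by
  set G := gradient f with hG
  set H := fderiv ℝ (gradient f) p with hH
  set B : E →L[ℝ] E := Ring.inverse H with hB
  have hcomp : B (H (p - z)) = p - z := oon_inverse_comp hμ H (hstrong p) (p - z)
  have hiden : p - B (G p) - z = B (H (p - z) - G p) := by
    rw [map_sub, hcomp]; abel
  have hbound := (oon_inverse_apply_bound hμ H (hstrong p) (H (p - z) - G p)).1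
  have htay := oon_taylor_grad f hf hLip p z
  have hnorm : ‖H (p - z) - G p‖ = ‖G z - G p - H (z - p)‖ := by
    rw [hz]
    congr 1
    rw [map_sub, map_sub]; abel
  have h2 : ‖H (p - z) - G p‖ ≤ LH / 2 * ‖p - z‖ ^ 2 := by
    rw [hnorm]
    calc ‖G z - G p - H (z - p)‖ ≤ LH / 2 * ‖z - p‖ ^ 2 := htay
      _ = LH / 2 * ‖p - z‖ ^ 2 := by rw [norm_sub_rev]
  calc ‖p - B (G p) - z‖ = ‖B (H (p - z) - G p)‖ := by rw [hiden]
    _ ≤ ‖H (p - z) - G p‖ / μ := hbound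
    _ ≤ (LH / 2 * ‖p - z‖ ^ 2) / μ := by gcongr
    _ = LH / (2 * μ) * ‖p - z‖ ^ 2 := by ring

lemma oon_young (c : ℝ) (hc : 0 < c) (A s : ℝ) :
    (A + s) ^ 2 ≤ (1 + c) * A ^ 2 + (1 + 1 / c) * s ^ 2 := by
  have hkey : c * ((1 + c) * A ^ 2 + (1 + 1 / c) * s ^ 2 - (A + s) ^ 2) = (c * A - s) ^ 2 := by
    field_simp; ring
  nlinarith [sq_nonneg (c * A - s), hc]

end Aux

set_option maxHeartbeats 1600000 in
/-- Summed tracking-error bound via the quartic path-length. -/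
theorem oon_tracking_sum {n : ℕ} (T : ℕ) (hT : 1 ≤ T)
    (f : ℕ → EuclideanSpace ℝ (Fin n) → ℝ)
    (μ LH : ℝ) (hμ : 0 < μ) (hLH : 0 < LH)
    (xstar : ℕ → EuclideanSpace ℝ (Fin n))
    (hC2 : ∀ t, 1 ≤ t → t ≤ T → ContDiff ℝ 2 (f t))
    (hstrong : ∀ t, 1 ≤ t → t ≤ T → ∀ x v,
      μ * ‖v‖ ^ 2 ≤ ⟪fderiv ℝ (gradient (f t)) x v, v⟫)
    (hmin : ∀ t, 1 ≤ t → t ≤ T → ∀ x, f t (xstar t) ≤ f t x)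
    (hHessLip : ∀ t, 1 ≤ t → t ≤ T → ∀ x y,
      ‖fderiv ℝ (gradient (f t)) x - fderiv ℝ (gradient (f t)) y‖ ≤ LH * ‖x - y‖)
    (xhat : ℕ → EuclideanSpace ℝ (Fin n)) (x1 : EuclideanSpace ℝ (Fin n))
    (hxhat0 : xhat 0 = x1)
    (hinit : ‖x1 - xstar 1‖ ≤ μ / LH)
    (hxhat : ∀ t, 1 ≤ t → t ≤ T →
      xhat t = xhat (t - 1) -
        Ring.inverse (fderiv ℝ (gradient (f t)) (xhat (t - 1)))
          (gradient (f t) (xhat (t - 1))))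
    (hpath : ∀ t, 2 ≤ t → t ≤ T → ‖xstar t - xstar (t - 1)‖ ≤ μ / (2 * LH))
    (c1 c2 ρ' ρ'' : ℝ) (hc1 : 0 < c1) (hc2 : 0 < c2)
    (hρ' : ρ' = (1 / 16) * (1 + c1) ^ 2 * (1 + c2)) (hρ'lt : ρ' < 1)
    (hρ'' : ρ'' = (LH / (2 * μ)) ^ 2 * (1 + 1 / c1) ^ 2 * (1 + 1 / c2)) :
    ∑ t ∈ Icc 1 T, ‖xhat t - xstar t‖ ^ 2 ≤
      (‖xhat 1 - xstar 1‖ ^ 2 - ρ' * ‖xhat T - xstar T‖ ^ 2) / (1 - ρ') +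
      ρ'' / (1 - ρ') * ∑ t ∈ Icc 2 T, ‖xstar t - xstar (t - 1)‖ ^ 4 := by
  have step : ∀ t, 1 ≤ t → t ≤ T →
      ‖xhat t - xstar t‖ ≤ LH / (2 * μ) * ‖xhat (t - 1) - xstar t‖ ^ 2 := by
    intro t h1 h2
    have hz : gradient (f t) (xstar t) = 0 := oon_grad_zero_of_min _ _ (hmin t h1 h2)
    rw [hxhat t h1 h2]
    exact oon_newton_step (f t) (hC2 t h1 h2) hμ (hstrong t h1 h2) (hHessLip t h1 h2) _ _ hz
  have tri : ∀ k : ℕ, ‖xhat k - xstar (k + 1)‖ ≤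
      ‖xhat k - xstar k‖ + ‖xstar (k + 1) - xstar k‖ := by
    intro k
    have := dist_triangle (xhat k) (xstar k) (xstar (k + 1))
    simp only [dist_eq_norm] at this
    calc ‖xhat k - xstar (k + 1)‖ ≤
          ‖xhat k - xstar k‖ + ‖xstar k - xstar (k + 1)‖ := this
      _ = ‖xhat k - xstar k‖ + ‖xstar (k + 1) - xstar k‖ := by rw [norm_sub_rev (xstar k)]
  have inv : ∀ t, 1 ≤ t → t ≤ T → ‖xhat t - xstar t‖ ≤ μ / (2 * LH) := by
    intro t
    induction t with
    | zero => intro h; omega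
    | succ k ih =>
      intro h1 hT'
      rcases Nat.eq_zero_or_pos k with hk | hk
      · subst hk
        have hs := step 1 le_rfl hT'
        simp only [Nat.sub_self] at hs
        rw [hxhat0] at hs
        have hn : ‖x1 - xstar 1‖ ^ 2 ≤ (μ / LH) ^ 2 :=
          pow_le_pow_left₀ (norm_nonneg _) hinit 2
        calc ‖xhat 1 - xstar 1‖ ≤ LH / (2 * μ) * ‖x1 - xstar 1‖ ^ 2 := hs
          _ ≤ LH / (2 * μ) * (μ / LH) ^ 2 := by gcongr
          _ = μ / (2 * LH) := by field_simp
      · have hkT : k ≤ T := by omega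
        have ihk := ih hk hkT
        have hs := step (k + 1) (by omega) hT'
        have hpp := hpath (k + 1) (by omega) hT'
        simp only [Nat.add_sub_cancel] at hs hpp
        have hd : ‖xhat k - xstar (k + 1)‖ ≤ μ / LH := by
          calc ‖xhat k - xstar (k + 1)‖ ≤
                ‖xhat k - xstar k‖ + ‖xstar (k + 1) - xstar k‖ := tri k
            _ ≤ μ / (2 * LH) + μ / (2 * LH) := add_le_add ihk hpp
            _ = μ / LH := by ring
        calc ‖xhat (k + 1) - xstar (k + 1)‖
            ≤ LH / (2 * μ) * ‖xhat k - xstar (k + 1)‖ ^ 2 := hs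
          _ ≤ LH / (2 * μ) * (μ / LH) ^ 2 := by gcongr
          _ = μ / (2 * LH) := by field_simp
  have hρ'nonneg : 0 ≤ ρ' := by rw [hρ']; positivity
  have h1ρ : 0 < 1 - ρ' := by linarith
  have pstep : ∀ t, 2 ≤ t → t ≤ T →
      ‖xhat t - xstar t‖ ^ 2 ≤ ρ' * ‖xhat (t - 1) - xstar (t - 1)‖ ^ 2 +
        ρ'' * ‖xstar t - xstar (t - 1)‖ ^ 4 := by
    intro t h2 hT'
    set A := ‖xhat (t - 1) - xstar (t - 1)‖ with hA
    set s := ‖xstar t - xstar (t - 1)‖ with hsdef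
    have hA0 : 0 ≤ A := norm_nonneg _
    have hs0 : 0 ≤ s := norm_nonneg _
    have hAle : A ≤ μ / (2 * LH) := inv (t - 1) (by omega) (by omega)
    have hd : ‖xhat (t - 1) - xstar t‖ ≤ A + s := by
      have := tri (t - 1)
      have ht1 : t - 1 + 1 = t := by omega
      rw [ht1] at this
      exact this
    have hstp := step t (by omega) hT'
    set κ := LH / (2 * μ) with hκ
    have hκ0 : 0 < κ := by rw [hκ]; positivity
    have e2 : ‖xhat t - xstar t‖ ^ 2 ≤ κ ^ 2 * (A + s) ^ 4 := by
      have h1 : ‖xhat t - xstar t‖ ≤ κ * (A + s) ^ 2 := by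
        calc ‖xhat t - xstar t‖ ≤ κ * ‖xhat (t - 1) - xstar t‖ ^ 2 := hstp
          _ ≤ κ * (A + s) ^ 2 := by gcongr
      calc ‖xhat t - xstar t‖ ^ 2 ≤ (κ * (A + s) ^ 2) ^ 2 :=
            pow_le_pow_left₀ (norm_nonneg _) h1 2
        _ = κ ^ 2 * (A + s) ^ 4 := by ring
    have hy1 : (A + s) ^ 2 ≤ (1 + c1) * A ^ 2 + (1 + 1 / c1) * s ^ 2 := oon_young c1 hc1 A s
    have hy2 : ((1 + c1) * A ^ 2 + (1 + 1 / c1) * s ^ 2) ^ 2 ≤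
        (1 + c2) * ((1 + c1) * A ^ 2) ^ 2 + (1 + 1 / c2) * ((1 + 1 / c1) * s ^ 2) ^ 2 :=
      oon_young c2 hc2 _ _
    have h4 : (A + s) ^ 4 ≤ (1 + c2) * (1 + c1) ^ 2 * A ^ 4 +
        (1 + 1 / c2) * (1 + 1 / c1) ^ 2 * s ^ 4 := by
      calc (A + s) ^ 4 = ((A + s) ^ 2) ^ 2 := by ring
        _ ≤ ((1 + c1) * A ^ 2 + (1 + 1 / c1) * s ^ 2) ^ 2 :=
            pow_le_pow_left₀ (by positivity) hy1 2
        _ ≤ (1 + c2) * ((1 + c1) * A ^ 2) ^ 2 + (1 + 1 / c2) * ((1 + 1 / c1) * s ^ 2) ^ 2 := hy2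
        _ = (1 + c2) * (1 + c1) ^ 2 * A ^ 4 + (1 + 1 / c2) * (1 + 1 / c1) ^ 2 * s ^ 4 := by ring
    have hκA : κ * A ≤ 1 / 4 := by
      calc κ * A ≤ κ * (μ / (2 * LH)) := by gcongr
        _ = 1 / 4 := by rw [hκ]; field_simp; ring
    have hκA0 : 0 ≤ κ * A := mul_nonneg hκ0.le hA0
    have hsq : (κ * A) ^ 2 ≤ (1 / 4 : ℝ) ^ 2 := pow_le_pow_left₀ hκA0 hκA 2
    have h16 : κ ^ 2 * A ^ 4 ≤ 1 / 16 * A ^ 2 := by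
      calc κ ^ 2 * A ^ 4 = (κ * A) ^ 2 * A ^ 2 := by ring
        _ ≤ (1 / 4 : ℝ) ^ 2 * A ^ 2 := mul_le_mul_of_nonneg_right hsq (sq_nonneg A)
        _ = 1 / 16 * A ^ 2 := by ring
    calc ‖xhat t - xstar t‖ ^ 2 ≤ κ ^ 2 * (A + s) ^ 4 := e2
      _ ≤ κ ^ 2 * ((1 + c2) * (1 + c1) ^ 2 * A ^ 4 +
            (1 + 1 / c2) * (1 + 1 / c1) ^ 2 * s ^ 4) := by gcongr
      _ = (1 + c2) * (1 + c1) ^ 2 * (κ ^ 2 * A ^ 4) + ρ'' * s ^ 4 := by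
          rw [hρ'', hκ]; ring
      _ ≤ (1 + c2) * (1 + c1) ^ 2 * (1 / 16 * A ^ 2) + ρ'' * s ^ 4 := by
          have h0 : (0:ℝ) ≤ (1 + c2) * (1 + c1) ^ 2 := by positivity
          have := mul_le_mul_of_nonneg_left h16 h0
          linarith
      _ = ρ' * A ^ 2 + ρ'' * s ^ 4 := by rw [hρ']; ring
  -- summation
  have hsum : ∑ t ∈ Icc 2 T, ‖xhat t - xstar t‖ ^ 2 ≤
      ρ' * ∑ t ∈ Icc 2 T, ‖xhat (t - 1) - xstar (t - 1)‖ ^ 2 +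
      ρ'' * ∑ t ∈ Icc 2 T, ‖xstar t - xstar (t - 1)‖ ^ 4 := by
    rw [Finset.mul_sum, Finset.mul_sum, ← Finset.sum_add_distrib]
    apply Finset.sum_le_sum
    intro t ht
    rw [Finset.mem_Icc] at ht
    exact pstep t ht.1 ht.2
  have hre : ∑ t ∈ Icc 2 T, ‖xhat (t - 1) - xstar (t - 1)‖ ^ 2 =
      ∑ t ∈ Icc 1 (T - 1), ‖xhat t - xstar t‖ ^ 2 := by
    have hmap : Icc 2 T = (Icc 1 (T - 1)).map ⟨fun t => t + 1, add_left_injective 1⟩ := by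
      ext x
      simp only [Finset.mem_map, Finset.mem_Icc, Function.Embedding.coeFn_mk]
      constructor
      · intro hx; exact ⟨x - 1, by omega, by omega⟩
      · rintro ⟨a, ha, rfl⟩; show 2 ≤ a + 1 ∧ a + 1 ≤ T; omega
    rw [hmap, Finset.sum_map]
    simp
  have hsplit1 : (Icc 1 T : Finset ℕ) = insert 1 (Icc 2 T) := by
    ext x
    simp only [Finset.mem_Icc, Finset.mem_insert]
    omega
  have hsplit2 : (Icc 1 T : Finset ℕ) = insert T (Icc 1 (T - 1)) := by
    ext x
    simp only [Finset.mem_Icc, Finset.mem_insert]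
    omega
  have hnot1 : (1 : ℕ) ∉ Icc 2 T := by simp
  have hnotT : T ∉ Icc 1 (T - 1) := by
    simp only [Finset.mem_Icc]
    omega
  set S := ∑ t ∈ Icc 1 T, ‖xhat t - xstar t‖ ^ 2 with hS
  set Q := ∑ t ∈ Icc 2 T, ‖xstar t - xstar (t - 1)‖ ^ 4 with hQ
  have e1 : S = ‖xhat 1 - xstar 1‖ ^ 2 + ∑ t ∈ Icc 2 T, ‖xhat t - xstar t‖ ^ 2 := by
    rw [hS, hsplit1, Finset.sum_insert hnot1]
  have e2 : ∑ t ∈ Icc 1 (T - 1), ‖xhat t - xstar t‖ ^ 2 = S - ‖xhat T - xstar T‖ ^ 2 := by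
    rw [hS, hsplit2, Finset.sum_insert hnotT]
    ring
  rw [hre, e2] at hsum
  have expand1 : ρ' * (S - ‖xhat T - xstar T‖ ^ 2) = ρ' * S - ρ' * ‖xhat T - xstar T‖ ^ 2 := by
    ring
  rw [expand1] at hsum
  have key : S * (1 - ρ') ≤ ‖xhat 1 - xstar 1‖ ^ 2 - ρ' * ‖xhat T - xstar T‖ ^ 2 + ρ'' * Q := by
    have expand2 : S * (1 - ρ') = S - ρ' * S := by ring
    rw [expand2]
    linarith [hsum, e1]
  have hrhs : (‖xhat 1 - xstar 1‖ ^ 2 - ρ' * ‖xhat T - xstar T‖ ^ 2) / (1 - ρ') +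
      ρ'' / (1 - ρ') * Q =
      (‖xhat 1 - xstar 1‖ ^ 2 - ρ' * ‖xhat T - xstar T‖ ^ 2 + ρ'' * Q) / (1 - ρ') := by
    ring
  rw [hrhs, le_div_iff₀ h1ρ]
  exact key
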